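/- arXiv:1202.1232 — 5 statements merged into one kernel-verified Lean document; each statement's English description precedes it below -/
import Mathlib

section
/- The key cancellation for the conservative discretization of the nonlinearity: for real square-summable grid functions $u$ with $u^k$ and $u^{k+1}$ square-summable, $(u^k D_0 u, u)_h + (D_0 u^{k+1}, u)_h = 0$, where $u^k$ denotes the pointwise power, $D_0 w_j = \frac{1}{2h}(w_{j+1}-w_{j-1})$, and $(z,w)_h = \sum_j h z_j w_j$. -/
/-!
Summation by parts makes `D₀` skew-adjoint for `(·,·)ₕ` as soon as the two shifted products are
summable, so `(D₀ u^{k+1}, u)ₕ = -(u^{k+1}, D₀ u)ₕ`, while `(uᵏ D₀ u, u)ₕ = (u^{k+1}, D₀ u)ₕ`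
termwise. Boundedness of `u` together with `u ∈ ℓ²` makes `u^{k+1}` times any shift of `u`
summable.
-/

noncomputable def centeredDiff (h : ℝ) (w : ℤ → ℝ) (j : ℤ) : ℝ :=
  (w (j + 1) - w (j - 1)) / (2 * h)

section Summability

variable {ι : Type*} {v w : ι → ℝ}

theorem Summable.mul_of_summable_sq (hv : Summable fun i => v i ^ 2)
    (hw : Summable fun i => w i ^ 2) : Summable fun i => v i * w i := by
  refine Summable.of_norm_bounded ((hv.add hw).div_const 2) fun i => ?_
  rw [Real.norm_eq_abs, abs_mul]
  nlinarith [two_mul_le_add_sq |v i| |w i|, sq_abs (v i), sq_abs (w i)]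

theorem Summable.mul_of_abs_le (hw : Summable w) {M : ℝ} (hv : ∀ i, |v i| ≤ M) :
    Summable fun i => v i * w i := by
  refine Summable.of_norm_bounded (hw.abs.mul_left M) fun i => ?_
  rw [Real.norm_eq_abs, abs_mul]
  exact mul_le_mul_of_nonneg_right (hv i) (abs_nonneg _)

theorem Summable.pow_succ_mul_of_summable_sq (hv : Summable fun i => v i ^ 2)
    (hw : Summable fun i => w i ^ 2) {M : ℝ} (hM : ∀ i, |v i| ≤ M) (k : ℕ) :
    Summable fun i => v i ^ (k + 1) * w i := by
  have hpow : ∀ i, |v i ^ k| ≤ M ^ k := fun i => by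
    rw [abs_pow]
    exact pow_le_pow_left₀ (abs_nonneg _) (hM i) k
  simpa only [pow_succ, mul_assoc] using (hv.mul_of_summable_sq hw).mul_of_abs_le hpow

end Summability

theorem tsum_centeredDiff_mul (h : ℝ) {w u : ℤ → ℝ}
    (hw_succ : Summable fun j => w j * u (j + 1)) (hw_pred : Summable fun j => w j * u (j - 1)) :
    ∑' j, centeredDiff h w j * u j = -∑' j, w j * centeredDiff h u j := by
  have hsucc : ∑' j, w (j + 1) * u j = ∑' j, w j * u (j - 1) := by
    rw [← (Equiv.addRight (1 : ℤ)).tsum_eq fun j => w j * u (j - 1)]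
    simp
  have hpred : ∑' j, w (j - 1) * u j = ∑' j, w j * u (j + 1) := by
    rw [← (Equiv.subRight (1 : ℤ)).tsum_eq fun j => w j * u (j + 1)]
    simp
  have hsucc' : Summable fun j => w (j + 1) * u j := by
    simpa [Function.comp_def] using (Equiv.addRight (1 : ℤ)).summable_iff.mpr hw_pred
  have hpred' : Summable fun j => w (j - 1) * u j := by
    simpa [Function.comp_def] using (Equiv.subRight (1 : ℤ)).summable_iff.mpr hw_succ
  calc ∑' j, centeredDiff h w j * u j
      = (∑' j, w (j + 1) * u j - ∑' j, w (j - 1) * u j) / (2 * h) := by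
        rw [← hsucc'.tsum_sub hpred', ← tsum_div_const]
        exact tsum_congr fun j => by unfold centeredDiff; ring
    _ = -((∑' j, w j * u (j + 1) - ∑' j, w j * u (j - 1)) / (2 * h)) := by
        rw [hsucc, hpred]; ring
    _ = -∑' j, w j * centeredDiff h u j := by
        rw [← hw_succ.tsum_sub hw_pred, ← tsum_div_const]
        exact congrArg Neg.neg (tsum_congr fun j => by unfold centeredDiff; ring)

theorem nonlinear_term_cancellation_general (h : ℝ) (k : ℕ)
    (u : ℤ → ℝ) (hu : Summable fun j => (u j) ^ 2) (hb : ∃ M, ∀ j, |u j| ≤ M) :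
    (∑' j : ℤ, h * ((u j) ^ k * ((u (j + 1) - u (j - 1)) / (2 * h))) * u j) +
      (∑' j : ℤ, h * (((u (j + 1)) ^ (k + 1) - (u (j - 1)) ^ (k + 1)) / (2 * h)) * u j) = 0 := by
  obtain ⟨M, hM⟩ := hb
  have hshift (s : ℤ) : Summable fun j => u j ^ (k + 1) * u (j + s) :=
    hu.pow_succ_mul_of_summable_sq (hu.comp_injective (add_left_injective s)) hM k
  have hparts := tsum_centeredDiff_mul h (w := fun j => u j ^ (k + 1)) (hshift 1)
    (by simpa only [sub_eq_add_neg] using hshift (-1))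
  calc _ = h * ∑' j, u j ^ (k + 1) * centeredDiff h u j
          + h * ∑' j, centeredDiff h (fun j => u j ^ (k + 1)) j * u j := by
        rw [← tsum_mul_left, ← tsum_mul_left]
        congr 1 <;> exact tsum_congr fun j => by unfold centeredDiff; ring
    _ = 0 := by rw [hparts]; ring

/-- The key cancellation for the conservative discretization of the nonlinearity:
`(uᵏ D₀ u, u)ₕ + (D₀ u^{k+1}, u)ₕ = 0`. -/
theorem nonlinear_term_cancellation (h : ℝ) (hh : 0 < h) (k : ℕ) (hk : 1 ≤ k)
    (u : ℤ → ℝ) (hu : Summable fun j => (u j) ^ 2) (hb : ∃ M, ∀ j, |u j| ≤ M) :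
    (∑' j : ℤ, h * ((u j) ^ k * ((u (j + 1) - u (j - 1)) / (2 * h))) * u j) +
      (∑' j : ℤ, h * (((u (j + 1)) ^ (k + 1) - (u (j - 1)) ^ (k + 1)) / (2 * h)) * u j) = 0 :=
  nonlinear_term_cancellation_general h k u hu hb
end

section
/- Discrete Gagliardo–Nirenberg-type inequality: there exists a constant $C > 0$ independent of $h$ such that for every $h>0$ and every real square-summable grid function $\phi$ with $D_+\phi$ square-summable, $\sup_j |\phi_j| \leq C\, \|\phi\|_{2,h}^{1/2} \|D_+\phi\|_{2,h}^{1/2}$, where $\|z\|_{2,h}^2 = \sum_j h|z_j|^2$ and $D_+\phi_j = (\phi_{j+1}-\phi_j)/h$. -/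
/-!
Telescoping gives `φ_j² = ∑_{i ≥ j} (φ_i² - φ_{i+1}²)`, each term is at most
`|Δφ_i| (|φ_i| + |φ_{i+1}|)`, and Cauchy–Schwarz turns this into
`φ_j² ≤ 2 ‖φ‖_{ℓ²} ‖Δφ‖_{ℓ²}`. In the weighted norms the factors `h` and `1/h` cancel in the
product `‖φ‖_{2,h} ‖D₊φ‖_{2,h} = ‖φ‖_{ℓ²} ‖Δφ‖_{ℓ²}`, so `C = √2` works for every `h`.
-/

open Filter Topology fwdDiff

theorem summable_abs_mul_and_tsum_le_sqrt_mul_sqrt {ι : Type*} {f g : ι → ℝ}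
    (hf : Summable fun i => f i ^ 2) (hg : Summable fun i => g i ^ 2) :
    Summable (fun i => |f i| * |g i|) ∧
      ∑' i, |f i| * |g i| ≤ √(∑' i, f i ^ 2) * √(∑' i, g i ^ 2) := by
  have hsq : ∀ u : ι → ℝ, (fun i => |u i| ^ (2 : ℝ)) = fun i => u i ^ 2 := fun u => by
    ext i; rw [Real.rpow_two, sq_abs]
  have := Real.summable_and_inner_le_Lp_mul_Lq_tsum_of_nonneg Real.HolderConjugate.two_two
    (fun i => abs_nonneg (f i)) (fun i => abs_nonneg (g i))
    (by rwa [hsq]) (by rwa [hsq])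
  simpa only [hsq, Real.sqrt_eq_rpow] using this

theorem le_tsum_of_neg_fwdDiff_le {u g : ℤ → ℝ} (hu : Tendsto u atTop (𝓝 0))
    (hg : Summable g) (hg0 : ∀ i, 0 ≤ g i) (hΔ : ∀ i, -Δ_[1] u i ≤ g i) (j : ℤ) :
    u j ≤ ∑' i, g i := by
  have partial_bound : ∀ m, j ≤ m → u j ≤ u m + ∑ i ∈ Finset.Ico j m, g i := by
    intro m hm
    induction m, hm using Int.leInduction with
    | base => simp
    | succ m hjm ih =>
      rw [← Finset.sum_Ico_add_eq_sum_Ico_add_one hjm]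
      have := hΔ m
      simp only [fwdDiff] at this
      linarith
  have hlim : Tendsto (fun m => u m + ∑' i, g i) atTop (𝓝 (∑' i, g i)) := by
    simpa using hu.add_const (∑' i, g i)
  refine ge_of_tendsto hlim ((eventually_ge_atTop j).mono fun m hm => ?_)
  exact (partial_bound m hm).trans
    (add_le_add_right (hg.sum_le_tsum _ fun i _ => hg0 i) _)

theorem sq_le_two_mul_sqrt_tsum_sq_mul_sqrt_tsum_sq_fwdDiff {φ : ℤ → ℝ}
    (hφ : Summable fun i => φ i ^ 2) (hΔ : Summable fun i => Δ_[1] φ i ^ 2) (j : ℤ) :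
    φ j ^ 2 ≤ 2 * (√(∑' i, φ i ^ 2) * √(∑' i, Δ_[1] φ i ^ 2)) := by
  have hφ' : Summable fun i => φ (i + 1) ^ 2 := (Equiv.addRight (1 : ℤ)).summable_iff.mpr hφ
  have hshift : ∑' i, φ (i + 1) ^ 2 = ∑' i, φ i ^ 2 :=
    (Equiv.addRight (1 : ℤ)).tsum_eq fun i => φ i ^ 2
  obtain ⟨hs₀, hle₀⟩ := summable_abs_mul_and_tsum_le_sqrt_mul_sqrt hφ hΔ
  obtain ⟨hs₁, hle₁⟩ := summable_abs_mul_and_tsum_le_sqrt_mul_sqrt hφ' hΔ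
  have hstep : ∀ i, -Δ_[1] (fun i => φ i ^ 2) i ≤
      |φ i| * |Δ_[1] φ i| + |φ (i + 1)| * |Δ_[1] φ i| := by
    intro i
    simp only [fwdDiff]
    calc -(φ (i + 1) ^ 2 - φ i ^ 2) = -((φ (i + 1) - φ i) * (φ (i + 1) + φ i)) := by ring
      _ ≤ |φ (i + 1) - φ i| * |φ (i + 1) + φ i| := by rw [← abs_mul]; exact neg_le_abs _
      _ ≤ |φ (i + 1) - φ i| * (|φ (i + 1)| + |φ i|) := by gcongr; exact abs_add_le _ _
      _ = _ := by ring
  have hu : Tendsto (fun i => φ i ^ 2) atTop (𝓝 0) :=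
    hφ.tendsto_cofinite_zero.mono_left atTop_le_cofinite
  calc φ j ^ 2 ≤ ∑' i, (|φ i| * |Δ_[1] φ i| + |φ (i + 1)| * |Δ_[1] φ i|) :=
        le_tsum_of_neg_fwdDiff_le hu (hs₀.add hs₁) (fun i => by positivity) hstep j
    _ = ∑' i, |φ i| * |Δ_[1] φ i| + ∑' i, |φ (i + 1)| * |Δ_[1] φ i| := hs₀.tsum_add hs₁
    _ ≤ 2 * (√(∑' i, φ i ^ 2) * √(∑' i, Δ_[1] φ i ^ 2)) := by
        rw [hshift] at hle₁; linarith

theorem sqrt_mul_mul_sqrt_div_cancel {h a : ℝ} (hh : 0 < h) (ha : 0 ≤ a) (b : ℝ) :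
    √(h * a) * √(b / h) = √a * √b := by
  rw [← Real.sqrt_mul (by positivity), ← Real.sqrt_mul ha]
  congr 1
  field_simp

/-- Discrete Gagliardo–Nirenberg-type inequality, with constant independent of `h`:
`‖φ‖_∞ ≤ C ‖φ‖_{2,h}^{1/2} ‖D₊φ‖_{2,h}^{1/2}`. -/
theorem discrete_gagliardo_nirenberg :
    ∃ C : ℝ, 0 < C ∧ ∀ (h : ℝ), 0 < h → ∀ φ : ℤ → ℝ,
      (Summable fun j => (φ j) ^ 2) →
      (Summable fun j => ((φ (j + 1) - φ j) / h) ^ 2) →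
      ∀ j : ℤ, |φ j| ≤
        C * (Real.sqrt (∑' i : ℤ, h * (φ i) ^ 2)) ^ ((1 : ℝ) / 2) *
          (Real.sqrt (∑' i : ℤ, h * ((φ (i + 1) - φ i) / h) ^ 2)) ^ ((1 : ℝ) / 2) := by
  refine ⟨√2, by positivity, fun h hh φ hφ hD j => ?_⟩
  have hscale : ∀ i, h * ((φ (i + 1) - φ i) / h) ^ 2 = Δ_[1] φ i ^ 2 / h := fun i => by
    simp only [fwdDiff]; field_simp
  have hΔ : Summable fun i => Δ_[1] φ i ^ 2 := by
    simpa only [hscale, summable_div_const_iff hh.ne'] using hD.mul_left h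
  have hφ₀ : 0 ≤ ∑' i, φ i ^ 2 := tsum_nonneg fun i => sq_nonneg (φ i)
  rw [tsum_mul_left, funext hscale, tsum_div_const, mul_assoc,
    ← Real.mul_rpow (Real.sqrt_nonneg _) (Real.sqrt_nonneg _),
    sqrt_mul_mul_sqrt_div_cancel hh hφ₀, ← Real.sqrt_eq_rpow, ← Real.sqrt_mul zero_le_two,
    ← Real.sqrt_sq_eq_abs]
  exact Real.sqrt_le_sqrt (sq_le_two_mul_sqrt_tsum_sq_mul_sqrt_tsum_sq_fwdDiff hφ hΔ j)
end

section
/- For the third difference operator $D^3 = D_+ D_0 D_-$ and a real square-summable grid function $u$ with square-summable differences, the identity $(D^3 u, p u)_h = A + B$ holds with the explicit decomposition $(D^3 u, pu)_h = \frac{h}{2}(D_+D_- u, D_+ p\, D_- u)_h + (D_- u, D_+ p\, D_- u)_h + (D_- u, u_- D_0 D_- p)_h + \frac{1}{2}(D_+ u, D_- p\, D_+ u)_h - \frac{h}{2}(D_+ u, D_- p\, D_+ D_- u)_h$, for any bounded grid function $p$ with bounded differences. -/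
/-!
Every summand in the identity is a product of two square-summable sequences (`u`, its shifts
and difference quotients) and a bounded one (`p`, its shifts and difference quotients), so by
Hölder all six series converge absolutely. The identity is then summation by parts: the
left-hand summand minus the right-hand summands is a forward difference `G (j + 1) - G j` of an
explicit summable sequence `G`, and such a difference sums to zero.
-/

open scoped ENNReal

section Memℓp

variable {α β : Type*} {p q r : ℝ≥0∞}

theorem Memℓp.comp_equiv {E : Type*} [NormedAddCommGroup E] {f : α → E} (hf : Memℓp f p)
    (e : β ≃ α) : Memℓp (f ∘ e) p := by
  obtain rfl | rfl | hp := p.trichotomy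
  · rw [memℓp_zero_iff] at hf ⊢
    exact hf.preimage e.injective.injOn
  · rw [memℓp_infty_iff] at hf ⊢
    rwa [← e.surjective.range_comp] at hf
  · rw [memℓp_gen_iff hp] at hf ⊢
    exact e.summable_iff.2 hf

theorem Memℓp.comp_add_right {G E : Type*} [AddGroup G] [NormedAddCommGroup E] {w : G → E}
    (hw : Memℓp w p) (k : G) : Memℓp (fun j ↦ w (j + k)) p :=
  hw.comp_equiv (Equiv.addRight k)

theorem Memℓp.comp_sub_right {G E : Type*} [AddGroup G] [NormedAddCommGroup E] {w : G → E}
    (hw : Memℓp w p) (k : G) : Memℓp (fun j ↦ w (j - k)) p := by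
  simpa only [sub_eq_add_neg] using hw.comp_add_right (-k)

theorem Memℓp.mul {f g : α → ℝ} [p.HolderTriple q r] (hf : Memℓp f p) (hg : Memℓp g q) :
    Memℓp (f * g) r :=
  hf.holder r hg (fun _ ↦ ContinuousLinearMap.mul ℝ ℝ) fun _ ↦ ContinuousLinearMap.opNorm_mul_le ℝ ℝ

theorem memℓp_two_iff_summable_sq {f : α → ℝ} : Memℓp f 2 ↔ Summable fun i ↦ f i ^ 2 := by
  simp [memℓp_gen_iff (p := 2) (by norm_num)]

theorem memℓp_infty_of_abs_le {f : α → ℝ} {M : ℝ} (hM : ∀ i, |f i| ≤ M) : Memℓp f ∞ :=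
  memℓp_infty ⟨M, by rintro _ ⟨i, rfl⟩; exact hM i⟩

theorem summable_mul_mul_of_memℓp {f g k : α → ℝ} (c : ℝ) (hf : Memℓp f 2)
    (hgk : Memℓp (g * k) 2) : Summable fun i ↦ c * f i * (g i * k i) := by
  simpa only [mul_assoc, Pi.mul_apply] using (hf.mul hgk).summable_of_one.mul_left c

end Memℓp

theorem Summable.hasSum_shift_sub_self {f : ℤ → ℝ} (hf : Summable f) :
    HasSum (fun j ↦ f (j + 1) - f j) 0 := by
  simpa using ((Equiv.addRight 1).hasSum_iff.2 hf.hasSum).sub hf.hasSum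

section DifferenceQuotients

variable (h : ℝ)

noncomputable def fwdDiffQuot (w : ℤ → ℝ) : ℤ → ℝ := fun j ↦ (w (j + 1) - w j) / h

noncomputable def bwdDiffQuot (w : ℤ → ℝ) : ℤ → ℝ := fun j ↦ (w j - w (j - 1)) / h

noncomputable def cenDiffQuot (w : ℤ → ℝ) : ℤ → ℝ := fun j ↦ (w (j + 1) - w (j - 1)) / (2 * h)

variable {p : ℝ≥0∞} {w : ℤ → ℝ}

theorem Memℓp.fwdDiffQuot (hw : Memℓp w p) : Memℓp (fwdDiffQuot h w) p := by
  convert ((hw.comp_add_right 1).sub hw).const_smul h⁻¹ using 1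
  exact funext fun _ ↦ div_eq_inv_mul _ _

theorem Memℓp.bwdDiffQuot (hw : Memℓp w p) : Memℓp (bwdDiffQuot h w) p := by
  convert (hw.sub (hw.comp_sub_right 1)).const_smul h⁻¹ using 1
  exact funext fun _ ↦ div_eq_inv_mul _ _

theorem Memℓp.cenDiffQuot (hw : Memℓp w p) : Memℓp (cenDiffQuot h w) p := by
  convert ((hw.comp_add_right 1).sub (hw.comp_sub_right 1)).const_smul (2 * h)⁻¹ using 1
  exact funext fun _ ↦ div_eq_inv_mul _ _

end DifferenceQuotients

/- The defect of the identity is a combination of monomials `u (j + a) * u (j + b) * p (j + c)`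
whose coefficients cancel within each class of simultaneous shifts of `(a, b, c)`; writing every
shift `m (j + c) - m j` as a telescoping sum produces this sequence. -/
noncomputable def thirdDiffFlux (h : ℝ) (u p : ℤ → ℝ) : ℤ → ℝ := fun j ↦
  1 / (2 * h) * u (j - 1) * (p (j - 1) * fwdDiffQuot h u j)
    - 1 / 2 * u (j - 1) * (bwdDiffQuot h p (j - 1) * bwdDiffQuot h u j)
    - 1 / (2 * h) * u j * (p j * bwdDiffQuot h u (j - 1))

theorem summable_thirdDiffFlux (h : ℝ) {u p : ℤ → ℝ} (hu : Memℓp u 2) (hp : Memℓp p ∞) :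
    Summable (thirdDiffFlux h u p) :=
  ((summable_mul_mul_of_memℓp _ (hu.comp_sub_right 1)
      ((hp.comp_sub_right 1).mul (hu.fwdDiffQuot h))).sub
    (summable_mul_mul_of_memℓp _ (hu.comp_sub_right 1)
      (((hp.bwdDiffQuot h).comp_sub_right 1).mul (hu.bwdDiffQuot h)))).sub
    (summable_mul_mul_of_memℓp _ hu (hp.mul ((hu.bwdDiffQuot h).comp_sub_right 1)))

theorem third_difference_summand_eq (h : ℝ) (u p : ℤ → ℝ) (j : ℤ) :
    h * fwdDiffQuot h (cenDiffQuot h (bwdDiffQuot h u)) j * (p j * u j) =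
      h / 2 * (h * fwdDiffQuot h (bwdDiffQuot h u) j * (fwdDiffQuot h p j * bwdDiffQuot h u j)) +
      h * bwdDiffQuot h u j * (fwdDiffQuot h p j * bwdDiffQuot h u j) +
      h * bwdDiffQuot h u j * (u (j - 1) * cenDiffQuot h (bwdDiffQuot h p) j) +
      1 / 2 * (h * fwdDiffQuot h u j * (bwdDiffQuot h p j * fwdDiffQuot h u j)) -
      h / 2 * (h * fwdDiffQuot h u j * (bwdDiffQuot h p j * fwdDiffQuot h (bwdDiffQuot h u) j)) +
      (thirdDiffFlux h u p (j + 1) - thirdDiffFlux h u p j) := by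
  rcases eq_or_ne h 0 with rfl | hh
  -- at `h = 0` every difference quotient is `0`, since `x / 0 = 0`
  · simp [thirdDiffFlux, fwdDiffQuot, bwdDiffQuot, cenDiffQuot]
  · simp only [thirdDiffFlux, fwdDiffQuot, bwdDiffQuot, cenDiffQuot, add_sub_cancel_right]
    field_simp
    ring

theorem third_difference_weighted_identity_general (h : ℝ)
    (Dp : (ℤ → ℝ) → ℤ → ℝ) (hDp : Dp = fun w j => (w (j + 1) - w j) / h)
    (Dm : (ℤ → ℝ) → ℤ → ℝ) (hDm : Dm = fun w j => (w j - w (j - 1)) / h)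
    (D0 : (ℤ → ℝ) → ℤ → ℝ) (hD0 : D0 = fun w j => (w (j + 1) - w (j - 1)) / (2 * h))
    (u p : ℤ → ℝ)
    (hu : Summable fun j => (u j) ^ 2)
    (hp : ∃ M, ∀ j, |p j| ≤ M) :
    (∑' j : ℤ, h * Dp (D0 (Dm u)) j * (p j * u j)) =
      (h / 2) * (∑' j : ℤ, h * Dp (Dm u) j * (Dp p j * Dm u j)) +
      (∑' j : ℤ, h * Dm u j * (Dp p j * Dm u j)) +
      (∑' j : ℤ, h * Dm u j * (u (j - 1) * D0 (Dm p) j)) +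
      (1 / 2) * (∑' j : ℤ, h * Dp u j * (Dm p j * Dp u j)) -
      (h / 2) * (∑' j : ℤ, h * Dp u j * (Dm p j * Dp (Dm u) j)) := by
  obtain rfl : Dp = fwdDiffQuot h := hDp
  obtain rfl : Dm = bwdDiffQuot h := hDm
  obtain rfl : D0 = cenDiffQuot h := hD0
  obtain ⟨M, hM⟩ := hp
  have hu : Memℓp u 2 := memℓp_two_iff_summable_sq.2 hu
  have hp : Memℓp p ∞ := memℓp_infty_of_abs_le hM
  have hDmu := hu.bwdDiffQuot h
  have hDpu := hu.fwdDiffQuot h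
  have hR1 := summable_mul_mul_of_memℓp h (hDmu.fwdDiffQuot h) ((hp.fwdDiffQuot h).mul hDmu)
  have hR2 := summable_mul_mul_of_memℓp h hDmu ((hp.fwdDiffQuot h).mul hDmu)
  have hR3 := summable_mul_mul_of_memℓp h hDmu
    ((hu.comp_sub_right 1).mul ((hp.bwdDiffQuot h).cenDiffQuot h))
  have hR4 := summable_mul_mul_of_memℓp h hDpu ((hp.bwdDiffQuot h).mul hDpu)
  have hR5 := summable_mul_mul_of_memℓp h hDpu ((hp.bwdDiffQuot h).mul (hDmu.fwdDiffQuot h))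
  have hsum := (((((hR1.hasSum.mul_left (h / 2)).add hR2.hasSum).add hR3.hasSum).add
    (hR4.hasSum.mul_left (1 / 2))).sub (hR5.hasSum.mul_left (h / 2))).add
    (summable_thirdDiffFlux h hu hp).hasSum_shift_sub_self
  rw [add_zero] at hsum
  exact (hsum.congr_fun (third_difference_summand_eq h u p)).tsum_eq

/-- The weighted identity for the third difference operator `D³ = D₊D₀D₋`:
`(D³u, pu)ₕ = (h/2)(D₊D₋u, D₊p D₋u)ₕ + (D₋u, D₊p D₋u)ₕ + (D₋u, u₋ D₀D₋p)ₕ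
  + (1/2)(D₊u, D₋p D₊u)ₕ - (h/2)(D₊u, D₋p D₊D₋u)ₕ`. -/
theorem third_difference_weighted_identity (h : ℝ) (hh : 0 < h)
    (Dp : (ℤ → ℝ) → ℤ → ℝ) (hDp : Dp = fun w j => (w (j + 1) - w j) / h)
    (Dm : (ℤ → ℝ) → ℤ → ℝ) (hDm : Dm = fun w j => (w j - w (j - 1)) / h)
    (D0 : (ℤ → ℝ) → ℤ → ℝ) (hD0 : D0 = fun w j => (w (j + 1) - w (j - 1)) / (2 * h))
    (u p : ℤ → ℝ)
    (hu : Summable fun j => (u j) ^ 2)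
    (hp : ∃ M, ∀ j, |p j| ≤ M)
    (hp' : ∃ M, ∀ j, |Dp p j| ≤ M ∧ |Dm p j| ≤ M) :
    (∑' j : ℤ, h * Dp (D0 (Dm u)) j * (p j * u j)) =
      (h / 2) * (∑' j : ℤ, h * Dp (Dm u) j * (Dp p j * Dm u j)) +
      (∑' j : ℤ, h * Dm u j * (Dp p j * Dm u j)) +
      (∑' j : ℤ, h * Dm u j * (u (j - 1) * D0 (Dm p) j)) +
      (1 / 2) * (∑' j : ℤ, h * Dp u j * (Dm p j * Dp u j)) -
      (h / 2) * (∑' j : ℤ, h * Dp u j * (Dm p j * Dp (Dm u) j)) :=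
  third_difference_weighted_identity_general h Dp hDp Dm hDm D0 hD0 u p hu hp
end

section
/- Miura transform of the explicit profile: for each real $c \leq -1$, the function $u_c^0(x)$ defined piecewise by $u_c^0(x) = \frac{c+1}{(c+1)x + c}$ for $x > 0$ and $u_c^0(x) = \frac{1}{x+c}$ for $x < 0$ satisfies $\mathcal{M}(u_c^0) := \partial_x u_c^0 + (u_c^0)^2 = \delta_0$ in the sense of distributions on $\mathbb{R}$, i.e., for every test function $\phi \in C_c^\infty(\mathbb{R})$, $-\int_{\mathbb{R}} u_c^0(x)\phi'(x)\,dx + \int_{\mathbb{R}} (u_c^0(x))^2 \phi(x)\,dx = \phi(0)$. -/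
open MeasureTheory

/-- Miura transform of the explicit profile: for `c ≤ -1`, the function
`u_c⁰(x) = (c+1)/((c+1)x+c)` for `x > 0`, `u_c⁰(x) = 1/(x+c)` for `x < 0`, satisfies
`∂ₓ u_c⁰ + (u_c⁰)² = δ₀` in the sense of distributions. -/
theorem miura_transform_delta (c : ℝ) (hc : c ≤ -1)
    (u : ℝ → ℝ) (hu : u = fun x => if 0 < x then (c + 1) / ((c + 1) * x + c) else 1 / (x + c))
    (φ : ℝ → ℝ) (hφ : ContDiff ℝ (⊤ : ℕ∞) φ) (hφc : HasCompactSupport φ) :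
    -(∫ x : ℝ, u x * deriv φ x) + ∫ x : ℝ, (u x) ^ 2 * φ x = φ 0 := by
  have hc0 : c < 0 := lt_of_le_of_lt hc (by norm_num)
  have hda : ∀ x : ℝ, 0 ≤ x → (c + 1) * x + c < 0 := by
    intro x hx
    have h1 : (c + 1) * x ≤ 0 := mul_nonpos_of_nonpos_of_nonneg (by linarith) hx
    linarith
  have hdb : ∀ x : ℝ, x ≤ 0 → x + c < 0 := fun x hx => by linarith
  set A : ℝ → ℝ := fun x => (c + 1) / ((c + 1) * max x 0 + c) with hA
  set B : ℝ → ℝ := fun x => 1 / (min x 0 + c) with hB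
  have hAcont : Continuous A := by
    apply continuous_const.div (by continuity)
    intro x; exact ne_of_lt (hda _ (le_max_right x 0))
  have hBcont : Continuous B := by
    apply continuous_const.div (by continuity)
    intro x; exact ne_of_lt (hdb _ (min_le_right x 0))
  have hφd : Differentiable ℝ φ := hφ.differentiable (by simp)
  have hφ'c : Continuous (deriv φ) := hφ.continuous_deriv (by simp)
  have hφ'cs : HasCompactSupport (deriv φ) := hφc.deriv
  -- the regularized integrands
  set Gp : ℝ → ℝ := fun x => A x * deriv φ x - (A x) ^ 2 * φ x with hGp
  set Gm : ℝ → ℝ := fun x => B x * deriv φ x - (B x) ^ 2 * φ x with hGm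
  have hGpcont : Continuous Gp := ((hAcont.mul hφ'c).sub ((hAcont.pow 2).mul hφ.continuous))
  have hGmcont : Continuous Gm := ((hBcont.mul hφ'c).sub ((hBcont.pow 2).mul hφ.continuous))
  have hGpcs : HasCompactSupport Gp := by
    have h1 : HasCompactSupport (fun x => A x * deriv φ x) := hφ'cs.mul_left
    have h2 : HasCompactSupport (fun x => (-(A x ^ 2)) * φ x) := hφc.mul_left
    simpa [hGp, sub_eq_add_neg, neg_mul, Pi.add_def] using h1.add h2
  have hGmcs : HasCompactSupport Gm := by
    have h1 : HasCompactSupport (fun x => B x * deriv φ x) := hφ'cs.mul_left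
    have h2 : HasCompactSupport (fun x => (-(B x ^ 2)) * φ x) := hφc.mul_left
    simpa [hGm, sub_eq_add_neg, neg_mul, Pi.add_def] using h1.add h2
  have hGpint : Integrable Gp := hGpcont.integrable_of_hasCompactSupport hGpcs
  have hGmint : Integrable Gm := hGmcont.integrable_of_hasCompactSupport hGmcs
  -- u agrees with A on Ioi 0 and with B on Iic 0
  have huA : ∀ x : ℝ, 0 < x → u x = A x := by
    intro x hx
    simp only [hu, hA, if_pos hx, max_eq_left hx.le]
  have huB : ∀ x : ℝ, x ≤ 0 → u x = B x := by
    intro x hx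
    simp only [hu, hB, if_neg (not_lt.mpr hx), min_eq_left hx]
  -- eventual vanishing of φ and deriv φ
  have hev : φ =ᶠ[Filter.cocompact ℝ] 0 := by
    rwa [hasCompactSupport_iff_eventuallyEq, Filter.coclosedCompact_eq_cocompact] at hφc
  have hevTop : ∀ᶠ x in Filter.atTop, φ x = 0 := by
    have : Filter.atTop ≤ Filter.cocompact ℝ := by
      rw [cocompact_eq_atBot_atTop]; exact le_sup_right
    exact (hev.filter_mono this).mono (fun x hx => hx)
  have hevBot : ∀ᶠ x in Filter.atBot, φ x = 0 := by
    have : Filter.atBot ≤ Filter.cocompact ℝ := by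
      rw [cocompact_eq_atBot_atTop]; exact le_sup_left
    exact (hev.filter_mono this).mono (fun x hx => hx)
  -- FTC on the right half line with f = a * φ
  set a : ℝ → ℝ := fun x => (c + 1) / ((c + 1) * x + c) with ha
  set b : ℝ → ℝ := fun x => 1 / (x + c) with hb
  have haderiv : ∀ x : ℝ, 0 ≤ x → HasDerivAt a (-(a x) ^ 2) x := by
    intro x hx
    have hD : ((c + 1) * x + c) ≠ 0 := ne_of_lt (hda x hx)
    have h1 : HasDerivAt (fun y : ℝ => (c + 1) * y + c) (c + 1) x := by
      simpa using ((hasDerivAt_id x).const_mul (c + 1)).add_const c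
    have h2 : HasDerivAt (fun y => (c + 1) / ((c + 1) * y + c)) _ x :=
      (hasDerivAt_const x (c + 1)).div h1 hD
    convert h2 using 1
    rw [ha]
    field_simp
    ring
  have hbderiv : ∀ x : ℝ, x ≤ 0 → HasDerivAt b (-(b x) ^ 2) x := by
    intro x hx
    have hD : (x + c) ≠ 0 := ne_of_lt (hdb x hx)
    have h1 : HasDerivAt (fun y : ℝ => y + c) 1 x := (hasDerivAt_id x).add_const c
    have h2 : HasDerivAt (fun y => 1 / (y + c)) _ x :=
      (hasDerivAt_const x (1 : ℝ)).div h1 hD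
    convert h2 using 1
    rw [hb]
    field_simp
    ring
  have hIoi : ∫ x in Set.Ioi (0 : ℝ), Gp x = 0 - a 0 * φ 0 := by
    apply integral_Ioi_of_hasDerivAt_of_tendsto' (f := fun x => a x * φ x)
    · intro x hx
      have hx0 : (0 : ℝ) ≤ x := hx
      have hd := (haderiv x hx0).mul (hφd x).hasDerivAt
      refine hd.congr_deriv ?_
      simp only [hGp, hA, ha, max_eq_left hx0]
      ring
    · exact hGpint.integrableOn
    · have : Filter.Tendsto (fun x => a x * φ x) Filter.atTop (nhds 0) := by
        apply Filter.Tendsto.congr' _ tendsto_const_nhds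
        filter_upwards [hevTop] with x hx
        simp [hx]
      exact this
  have hIic : ∫ x in Set.Iic (0 : ℝ), Gm x = b 0 * φ 0 - 0 := by
    apply integral_Iic_of_hasDerivAt_of_tendsto' (f := fun x => b x * φ x)
    · intro x hx
      have hx0 : x ≤ (0 : ℝ) := hx
      have hd := (hbderiv x hx0).mul (hφd x).hasDerivAt
      refine hd.congr_deriv ?_
      simp only [hGm, hB, hb, min_eq_left hx0]
      ring
    · exact hGmint.integrableOn
    · have : Filter.Tendsto (fun x => b x * φ x) Filter.atBot (nhds 0) := by
        apply Filter.Tendsto.congr' _ tendsto_const_nhds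
        filter_upwards [hevBot] with x hx
        simp [hx]
      exact this
  -- integrability of the two original integrands
  have hEq1 : Set.EqOn (fun x => A x * deriv φ x) (fun x => u x * deriv φ x) (Set.Ioi 0) := by
    intro x hx; simp only [huA x hx]
  have hEq2 : Set.EqOn (fun x => B x * deriv φ x) (fun x => u x * deriv φ x) (Set.Iic 0) := by
    intro x hx; simp only [huB x hx]
  have hEq3 : Set.EqOn (fun x => (A x) ^ 2 * φ x) (fun x => (u x) ^ 2 * φ x) (Set.Ioi 0) := by
    intro x hx; simp only [huA x hx]
  have hEq4 : Set.EqOn (fun x => (B x) ^ 2 * φ x) (fun x => (u x) ^ 2 * φ x) (Set.Iic 0) := by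
    intro x hx; simp only [huB x hx]
  have hintA1 : Integrable (fun x => A x * deriv φ x) :=
    (hAcont.mul hφ'c).integrable_of_hasCompactSupport hφ'cs.mul_left
  have hintB1 : Integrable (fun x => B x * deriv φ x) :=
    (hBcont.mul hφ'c).integrable_of_hasCompactSupport hφ'cs.mul_left
  have hintA2 : Integrable (fun x => (A x) ^ 2 * φ x) :=
    ((hAcont.pow 2).mul hφ.continuous).integrable_of_hasCompactSupport hφc.mul_left
  have hintB2 : Integrable (fun x => (B x) ^ 2 * φ x) :=
    ((hBcont.pow 2).mul hφ.continuous).integrable_of_hasCompactSupport hφc.mul_left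
  have hu1 : Integrable (fun x => u x * deriv φ x) := by
    rw [← integrableOn_univ, ← Set.Iic_union_Ioi (a := (0 : ℝ))]
    exact (hintB1.integrableOn.congr_fun hEq2 measurableSet_Iic).union
      (hintA1.integrableOn.congr_fun hEq1 measurableSet_Ioi)
  have hu2 : Integrable (fun x => (u x) ^ 2 * φ x) := by
    rw [← integrableOn_univ, ← Set.Iic_union_Ioi (a := (0 : ℝ))]
    exact (hintB2.integrableOn.congr_fun hEq4 measurableSet_Iic).union
      (hintA2.integrableOn.congr_fun hEq3 measurableSet_Ioi)
  -- splitting the integral of F = u φ' - u² φ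
  set F : ℝ → ℝ := fun x => u x * deriv φ x - (u x) ^ 2 * φ x with hF
  have hFint : Integrable F := hu1.sub hu2
  have hsplit : (∫ x in Set.Iic (0 : ℝ), F x) + (∫ x in Set.Ioi (0 : ℝ), F x) = ∫ x, F x := by
    exact intervalIntegral.integral_Iic_add_Ioi (b := (0 : ℝ))
      hFint.integrableOn hFint.integrableOn
  have hFGp : ∫ x in Set.Ioi (0 : ℝ), F x = ∫ x in Set.Ioi (0 : ℝ), Gp x := by
    apply setIntegral_congr_fun measurableSet_Ioi
    intro x hx
    simp only [hF, hGp, huA x hx]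
  have hFGm : ∫ x in Set.Iic (0 : ℝ), F x = ∫ x in Set.Iic (0 : ℝ), Gm x := by
    apply setIntegral_congr_fun measurableSet_Iic
    intro x hx
    simp only [hF, hGm, huB x hx]
  have hFval : ∫ x, F x = (∫ x, u x * deriv φ x) - ∫ x, (u x) ^ 2 * φ x :=
    integral_sub hu1 hu2
  have ha0 : a 0 = (c + 1) / c := by simp [ha]
  have hb0 : b 0 = 1 / c := by simp [hb]
  have hcne : c ≠ 0 := ne_of_lt hc0
  have hnum : (b 0 * φ 0 - 0) + (0 - a 0 * φ 0) = -φ 0 := by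
    rw [ha0, hb0]
    field_simp
    ring
  linarith [hsplit, hFGp, hFGm, hIoi, hIic, hFval, hnum]
end

section
/- Generalized Miura identity: for real parameters $c, \varepsilon$ with $c < 0$, $c + \varepsilon \neq 0$, and such that $(c+\varepsilon)x + c \neq 0$ for all $x > 0$, the function $u_{c,\varepsilon}^0(x) = \frac{c+\varepsilon}{(c+\varepsilon)x+c}$ for $x>0$ and $u_{c,\varepsilon}^0(x) = \frac{1}{x+c}$ for $x<0$ satisfies $\partial_x u_{c,\varepsilon}^0 + (u_{c,\varepsilon}^0)^2 = N(c,\varepsilon)\, \delta_0$ in the sense of distributions, where $N(c,\varepsilon) = \frac{c+\varepsilon-1}{c}$. -/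
open MeasureTheory Set Filter

private lemma integrableOn_Ioi_aux {f : ℝ → ℝ} {R : ℝ} (hf : ContinuousOn f (Ici 0))
    (hR : ∀ x : ℝ, R < x → f x = 0) : IntegrableOn f (Ioi (0:ℝ)) := by
  have h1 : IntegrableOn f (Icc 0 R) :=
    (hf.mono Icc_subset_Ici_self).integrableOn_compact isCompact_Icc
  have h2 : IntegrableOn f (Ioi R) :=
    integrableOn_zero.congr_fun (fun x hx => (hR x hx).symm) measurableSet_Ioi
  refine (h1.union h2).mono_set ?_
  intro x hx
  by_cases h : x ≤ R
  · exact Or.inl ⟨le_of_lt hx, h⟩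
  · exact Or.inr (lt_of_not_ge h)

private lemma integrableOn_Iic_aux {f : ℝ → ℝ} {R : ℝ} (hf : ContinuousOn f (Iic 0))
    (hR : ∀ x : ℝ, x < -R → f x = 0) : IntegrableOn f (Iic (0:ℝ)) := by
  have h1 : IntegrableOn f (Icc (-R) 0) :=
    (hf.mono Icc_subset_Iic_self).integrableOn_compact isCompact_Icc
  have h2 : IntegrableOn f (Iio (-R)) :=
    integrableOn_zero.congr_fun (fun x hx => (hR x hx).symm) measurableSet_Iio
  refine (h2.union h1).mono_set ?_
  intro x hx
  by_cases h : x < -R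
  · exact Or.inl h
  · exact Or.inr ⟨le_of_not_gt h, hx⟩

/-- Generalized Miura identity: `∂ₓ u⁰_{c,ε} + (u⁰_{c,ε})² = N(c,ε) δ₀` with
`N(c,ε) = (c+ε-1)/c`, in the sense of distributions. -/
theorem generalized_miura_transform (c ε : ℝ) (hc : c < 0) (hce : c + ε ≠ 0)
    (hden : ∀ x : ℝ, 0 ≤ x → (c + ε) * x + c ≠ 0)
    (u : ℝ → ℝ)
    (hu : u = fun x => if 0 < x then (c + ε) / ((c + ε) * x + c) else 1 / (x + c))
    (φ : ℝ → ℝ) (hφ : ContDiff ℝ (⊤ : ℕ∞) φ) (hφc : HasCompactSupport φ) :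
    -(∫ x : ℝ, u x * deriv φ x) + ∫ x : ℝ, (u x) ^ 2 * φ x = (c + ε - 1) / c * φ 0 := by
  obtain ⟨R, hRsub⟩ := hφc.isBounded.subset_closedBall 0
  have hφ0 : ∀ x : ℝ, R < |x| → φ x = 0 := by
    intro x hx
    apply image_eq_zero_of_notMem_tsupport
    intro hmem
    have := hRsub hmem
    rw [Metric.mem_closedBall, Real.dist_eq, sub_zero] at this
    linarith
  have hφ0' : ∀ x : ℝ, R < |x| → deriv φ x = 0 := by
    intro x hx
    by_contra h
    have hmem : x ∈ tsupport φ := support_deriv_subset (Function.mem_support.mpr h)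
    have := hRsub hmem
    rw [Metric.mem_closedBall, Real.dist_eq, sub_zero] at this
    linarith
  have habs1 : ∀ x : ℝ, R < x → R < |x| := fun x hx => lt_abs.mpr (Or.inl hx)
  have habs2 : ∀ x : ℝ, x < -R → R < |x| := fun x hx => lt_abs.mpr (Or.inr (by linarith))
  -- differentiability of φ
  have hφd : Differentiable ℝ φ := hφ.differentiable (by simp)
  have hφ'c : Continuous (deriv φ) := hφ.continuous_deriv (by simp)
  -- the two pieces
  set v : ℝ → ℝ := fun x => (c + ε) / ((c + ε) * x + c) with hv
  set w : ℝ → ℝ := fun x => 1 / (x + c) with hw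
  have hwne : ∀ x : ℝ, x ≤ 0 → x + c ≠ 0 := fun x hx => by nlinarith
  have hvcont : ContinuousOn v (Ici 0) :=
    continuousOn_const.div (by fun_prop) (fun x hx => hden x hx)
  have hwcont : ContinuousOn w (Iic 0) :=
    continuousOn_const.div (by fun_prop) (fun x hx => hwne x hx)
  -- u agrees with v on Ioi 0 and with w on Iic 0
  have huv : ∀ x ∈ Ioi (0:ℝ), u x = v x := fun x hx => by
    simp [hu, hv, if_pos (mem_Ioi.mp hx)]
  have huw : ∀ x ∈ Iic (0:ℝ), u x = w x := fun x hx => by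
    simp [hu, hw, if_neg (not_lt.mpr (mem_Iic.mp hx))]
  -- derivatives
  have hv' : ∀ x ∈ Ioi (0:ℝ), HasDerivAt (fun y => v y * φ y)
      (-(v x) ^ 2 * φ x + v x * deriv φ x) x := by
    intro x hx
    have hne := hden x (le_of_lt hx)
    have hd : HasDerivAt (fun y : ℝ => (c + ε) * y + c) (c + ε) x := by
      simpa using ((hasDerivAt_id x).const_mul (c + ε)).add_const c
    have h1 : HasDerivAt v ((0 * ((c + ε) * x + c) - (c + ε) * (c + ε)) /
        ((c + ε) * x + c) ^ 2) x := (hasDerivAt_const x (c + ε)).div hd hne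
    have h1' : HasDerivAt v (-(v x) ^ 2) x := by
      convert h1 using 1
      rw [hv]
      field_simp
      ring
    exact (h1'.mul (hφd x).hasDerivAt).congr_deriv (by ring)
  have hw' : ∀ x ∈ Iio (0:ℝ), HasDerivAt (fun y => w y * φ y)
      (-(w x) ^ 2 * φ x + w x * deriv φ x) x := by
    intro x hx
    have hne := hwne x (le_of_lt hx)
    have hd : HasDerivAt (fun y : ℝ => y + c) 1 x := (hasDerivAt_id x).add_const c
    have h1 : HasDerivAt w ((0 * (x + c) - 1 * 1) / (x + c) ^ 2) x :=
      (hasDerivAt_const x (1:ℝ)).div hd hne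
    have h1' : HasDerivAt w (-(w x) ^ 2) x := by
      convert h1 using 1
      rw [hw]
      field_simp
      ring
    exact (h1'.mul (hφd x).hasDerivAt).congr_deriv (by ring)
  -- integrability of the four pieces
  have hIvφ' : IntegrableOn (fun x => v x * deriv φ x) (Ioi (0:ℝ)) :=
    integrableOn_Ioi_aux (hvcont.mul hφ'c.continuousOn)
      (fun x hx => by rw [hφ0' x (habs1 x hx), mul_zero])
  have hIv2φ : IntegrableOn (fun x => (v x) ^ 2 * φ x) (Ioi (0:ℝ)) :=
    integrableOn_Ioi_aux ((hvcont.pow 2).mul hφ.continuous.continuousOn)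
      (fun x hx => by rw [hφ0 x (habs1 x hx), mul_zero])
  have hIwφ' : IntegrableOn (fun x => w x * deriv φ x) (Iic (0:ℝ)) :=
    integrableOn_Iic_aux (hwcont.mul hφ'c.continuousOn)
      (fun x hx => by rw [hφ0' x (habs2 x hx), mul_zero])
  have hIw2φ : IntegrableOn (fun x => (w x) ^ 2 * φ x) (Iic (0:ℝ)) :=
    integrableOn_Iic_aux ((hwcont.pow 2).mul hφ.continuous.continuousOn)
      (fun x hx => by rw [hφ0 x (habs2 x hx), mul_zero])
  -- u-versions of integrability
  have hIuφ'p : IntegrableOn (fun x => u x * deriv φ x) (Ioi (0:ℝ)) :=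
    hIvφ'.congr_fun (fun x hx => by rw [huv x hx]) measurableSet_Ioi
  have hIu2φp : IntegrableOn (fun x => (u x) ^ 2 * φ x) (Ioi (0:ℝ)) :=
    IntegrableOn.congr_fun hIv2φ (fun x hx => by rw [huv x hx]) measurableSet_Ioi
  have hIuφ'm : IntegrableOn (fun x => u x * deriv φ x) (Iic (0:ℝ)) :=
    hIwφ'.congr_fun (fun x hx => by rw [huw x hx]) measurableSet_Iic
  have hIu2φm : IntegrableOn (fun x => (u x) ^ 2 * φ x) (Iic (0:ℝ)) :=
    IntegrableOn.congr_fun hIw2φ (fun x hx => by rw [huw x hx]) measurableSet_Iic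
  -- FTC on Ioi 0
  have keyp : ∫ x in Ioi (0:ℝ), (-(v x) ^ 2 * φ x + v x * deriv φ x) = 0 - v 0 * φ 0 := by
    refine integral_Ioi_of_hasDerivAt_of_tendsto (f := fun y => v y * φ y)
      (f' := fun x => -(v x) ^ 2 * φ x + v x * deriv φ x) ?_ ?_ ?_ ?_
    · exact (hvcont.mul hφ.continuous.continuousOn) 0 self_mem_Ici
    · exact hv'
    · exact (IntegrableOn.congr_fun hIv2φ.neg (fun x _ => by simp only [Pi.neg_apply]; ring) measurableSet_Ioi).add hIvφ'
    · apply Tendsto.congr' _ tendsto_const_nhds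
      filter_upwards [eventually_gt_atTop R] with x hx
      rw [hφ0 x (habs1 x hx), mul_zero]
  -- FTC on Iic 0
  have keym : ∫ x in Iic (0:ℝ), (-(w x) ^ 2 * φ x + w x * deriv φ x) = w 0 * φ 0 - 0 := by
    refine integral_Iic_of_hasDerivAt_of_tendsto (f := fun y => w y * φ y)
      (f' := fun x => -(w x) ^ 2 * φ x + w x * deriv φ x) ?_ ?_ ?_ ?_
    · exact (hwcont.mul hφ.continuous.continuousOn) 0 self_mem_Iic
    · exact hw'
    · exact (IntegrableOn.congr_fun hIw2φ.neg (fun x _ => by simp only [Pi.neg_apply]; ring) measurableSet_Iic).add hIwφ'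
    · apply Tendsto.congr' _ tendsto_const_nhds
      filter_upwards [eventually_lt_atBot (-R)] with x hx
      rw [hφ0 x (habs2 x hx), mul_zero]
  -- split the sums in the FTC identities
  have keyp' : -(∫ x in Ioi (0:ℝ), u x * deriv φ x) + ∫ x in Ioi (0:ℝ), (u x) ^ 2 * φ x
      = (c + ε) / c * φ 0 := by
    rw [integral_add (IntegrableOn.congr_fun hIv2φ.neg (fun x _ => by simp only [Pi.neg_apply]; ring) measurableSet_Ioi) hIvφ'] at keyp
    rw [setIntegral_congr_fun measurableSet_Ioi
        (fun x hx => by simp only [huv x hx] : EqOn (fun x => u x * deriv φ x) (fun x => v x * deriv φ x) (Ioi 0)),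
      setIntegral_congr_fun measurableSet_Ioi
        (fun x hx => by simp only [huv x hx] : EqOn (fun x => (u x) ^ 2 * φ x) (fun x => (v x) ^ 2 * φ x) (Ioi 0))]
    have h2 : ∫ x in Ioi (0:ℝ), -(v x) ^ 2 * φ x = -∫ x in Ioi (0:ℝ), (v x) ^ 2 * φ x := by
      rw [← integral_neg]; congr 1; ext x; ring
    rw [h2] at keyp
    have hv0 : v 0 = (c + ε) / c := by rw [hv]; norm_num
    rw [hv0] at keyp
    linarith
  have keym' : -(∫ x in Iic (0:ℝ), u x * deriv φ x) + ∫ x in Iic (0:ℝ), (u x) ^ 2 * φ x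
      = -(1 / c) * φ 0 := by
    rw [integral_add (IntegrableOn.congr_fun hIw2φ.neg (fun x _ => by simp only [Pi.neg_apply]; ring) measurableSet_Iic) hIwφ'] at keym
    rw [setIntegral_congr_fun measurableSet_Iic
        (fun x hx => by simp only [huw x hx] : EqOn (fun x => u x * deriv φ x) (fun x => w x * deriv φ x) (Iic 0)),
      setIntegral_congr_fun measurableSet_Iic
        (fun x hx => by simp only [huw x hx] : EqOn (fun x => (u x) ^ 2 * φ x) (fun x => (w x) ^ 2 * φ x) (Iic 0))]
    have h2 : ∫ x in Iic (0:ℝ), -(w x) ^ 2 * φ x = -∫ x in Iic (0:ℝ), (w x) ^ 2 * φ x := by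
      rw [← integral_neg]; congr 1; ext x; ring
    rw [h2] at keym
    have hw0 : w 0 = 1 / c := by rw [hw]; norm_num
    rw [hw0] at keym
    linarith
  -- combine
  rw [← intervalIntegral.integral_Iic_add_Ioi hIuφ'm hIuφ'p, ← intervalIntegral.integral_Iic_add_Ioi hIu2φm hIu2φp]
  have : (c + ε - 1) / c * φ 0 = -(1 / c) * φ 0 + (c + ε) / c * φ 0 := by
    field_simp
    ring
  rw [this, ← keym', ← keyp']
  ring
end
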